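/- Fix α ∈ (0,1) and a constant β ∈ ℝ. For each sufficiently large d there exists a unique γ(d) > 2 solving (1/2)log d + β + Ω(γ(d)) − γ(d)²/2 = 0, where Ω is the log-potential of the semicircle law of radius 2, and the solution satisfies γ(d) = √(log d) + (log log d)/(2√(log d)) + β/√(log d) + o(1/√(log d)) as d → ∞. -/

import Mathlib

/-!
For `u > 2`, `Ω(u)` is the average of `log (u - l)` against the semicircle density `ρ`,
so `log (u - 2) ≤ Ω(u) ≤ log (u + 2)`. Since `ρ(l) / (u - l) ≤ π⁻¹ (2 - l)^(-1/2)`, whose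
integral is `4/π < 2`, `Ω` is `4/π`-Lipschitz on `(2, ∞)`; hence `Ω(u) - u²/2` is strictly
decreasing there, and the intermediate value theorem puts the root `γ` in `[√L, √L + 2]`,
`L = log d`.
With `E = γ² - L - 2β = 2Ω(γ)`, the logarithmic bounds squeeze `E - log L` between
`2 log (1 - 2/√L)` and `2 log (1 + 4/√L)`. Finally, for `c = (log L + 2β)/(2√L) → 0`,
`|γ - (√L + c)| √L ≤ |γ² - (√L + c)²| = |E - log L - c²| → 0`.
-/

open scoped BigOperators
open Filter

/-- The logarithmic potential `Ω(u) = ∫ log|u-λ| dμ_sc(λ)` of the semicircle law of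
radius `2`, with density `(1/2π)√(4-λ²)` on `[-2,2]`. -/
noncomputable def semicircleLogPotential (u : ℝ) : ℝ :=
  ∫ l in (-2 : ℝ)..2, Real.log |u - l| * ((1 / (2 * Real.pi)) * Real.sqrt (4 - l ^ 2))

open Real Set MeasureTheory Topology

noncomputable def semicircleDensity (l : ℝ) : ℝ := 1 / (2 * π) * √(4 - l ^ 2)

lemma continuous_semicircleDensity : Continuous semicircleDensity := by
  unfold semicircleDensity
  fun_prop

lemma semicircleDensity_nonneg (l : ℝ) : 0 ≤ semicircleDensity l := by
  unfold semicircleDensity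
  positivity

lemma integral_semicircleDensity : ∫ l in (-2 : ℝ)..2, semicircleDensity l = 1 := by
  have h (l : ℝ) : semicircleDensity l = π⁻¹ * √(1 - (l / 2) ^ 2) := by
    rw [semicircleDensity, show 4 - l ^ 2 = 2 ^ 2 * (1 - (l / 2) ^ 2) by ring,
      sqrt_mul (by positivity), sqrt_sq zero_le_two]
    field_simp
  simp only [h]
  rw [intervalIntegral.integral_const_mul,
    intervalIntegral.integral_comp_div (fun x => √(1 - x ^ 2)) two_ne_zero]
  norm_num [integral_sqrt_one_sub_sq]
  field_simp

lemma intervalIntegrable_two_sub_rpow_neg_half :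
    IntervalIntegrable (fun l : ℝ => (2 - l) ^ (-(1 / 2) : ℝ)) volume (-2) 2 := by
  have h := (intervalIntegral.intervalIntegrable_rpow' (a := 0) (b := 4)
    (r := -(1 / 2)) (by norm_num)).comp_sub_left 2
  norm_num at h
  exact h.symm

lemma integral_two_sub_rpow_neg_half :
    ∫ l in (-2 : ℝ)..2, (2 - l) ^ (-(1 / 2) : ℝ) = 4 := by
  rw [intervalIntegral.integral_comp_sub_left (fun x => x ^ (-(1 / 2) : ℝ)) 2]
  norm_num [integral_rpow, zero_rpow]

lemma semicircleLogPotential_eq_integral {u : ℝ} (hu : 2 < u) :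
    semicircleLogPotential u = ∫ l in (-2 : ℝ)..2, log (u - l) * semicircleDensity l := by
  refine intervalIntegral.integral_congr fun l hl => ?_
  rw [uIcc_of_le (by norm_num)] at hl
  simp only [semicircleDensity, abs_of_pos (show 0 < u - l by linarith [hl.2])]

lemma intervalIntegrable_log_sub_mul_semicircleDensity {u : ℝ} (hu : 2 < u) :
    IntervalIntegrable (fun l => log (u - l) * semicircleDensity l) volume (-2) 2 := by
  refine ContinuousOn.intervalIntegrable
    (.mul (fun l hl => ?_) continuous_semicircleDensity.continuousOn)
  rw [uIcc_of_le (by norm_num)] at hl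
  exact ((continuousAt_const.sub continuousAt_id).log
    (show 0 < u - l by linarith [hl.2]).ne').continuousWithinAt

lemma integral_const_mul_semicircleDensity (c : ℝ) :
    ∫ l in (-2 : ℝ)..2, c * semicircleDensity l = c := by
  rw [intervalIntegral.integral_const_mul, integral_semicircleDensity, mul_one]

lemma log_sub_two_le_semicircleLogPotential {u : ℝ} (hu : 2 < u) :
    log (u - 2) ≤ semicircleLogPotential u := by
  rw [semicircleLogPotential_eq_integral hu]
  conv_lhs => rw [← integral_const_mul_semicircleDensity (log (u - 2))]
  refine intervalIntegral.integral_mono_on (by norm_num)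
    ((continuous_const.mul continuous_semicircleDensity).intervalIntegrable _ _)
    (intervalIntegrable_log_sub_mul_semicircleDensity hu) fun l hl => ?_
  exact mul_le_mul_of_nonneg_right (log_le_log (by linarith) (by linarith [hl.2]))
    (semicircleDensity_nonneg l)

lemma semicircleLogPotential_le_log_add_two {u : ℝ} (hu : 2 < u) :
    semicircleLogPotential u ≤ log (u + 2) := by
  rw [semicircleLogPotential_eq_integral hu]
  conv_rhs => rw [← integral_const_mul_semicircleDensity (log (u + 2))]
  refine intervalIntegral.integral_mono_on (by norm_num)
    (intervalIntegrable_log_sub_mul_semicircleDensity hu)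
    ((continuous_const.mul continuous_semicircleDensity).intervalIntegrable _ _) fun l hl => ?_
  exact mul_le_mul_of_nonneg_right (log_le_log (by linarith [hl.2]) (by linarith [hl.1]))
    (semicircleDensity_nonneg l)

lemma log_sub_log_le_div {a b : ℝ} (ha : 0 < a) (hb : 0 < b) : log b - log a ≤ (b - a) / a := by
  rw [← log_div hb.ne' ha.ne']
  calc log (b / a) ≤ b / a - 1 := log_le_sub_one_of_pos (div_pos hb ha)
    _ = (b - a) / a := by field_simp

lemma semicircleDensity_div_le {u l : ℝ} (hu : 2 ≤ u) (hl : l ∈ Ico (-2 : ℝ) 2) :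
    semicircleDensity l / (u - l) ≤ π⁻¹ * (2 - l) ^ (-(1 / 2) : ℝ) := by
  have h2l : 0 < 2 - l := by linarith [hl.2]
  have hsqrt : √(4 - l ^ 2) ≤ 2 * √(2 - l) := by
    rw [show 4 - l ^ 2 = (2 - l) * (2 + l) by ring, sqrt_mul h2l.le, mul_comm 2]
    gcongr
    calc √(2 + l) ≤ √(2 ^ 2) := sqrt_le_sqrt (by linarith [hl.2])
      _ = 2 := sqrt_sq zero_le_two
  rw [rpow_neg h2l.le, ← sqrt_eq_rpow, semicircleDensity, div_le_iff₀ (by linarith)]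
  calc 1 / (2 * π) * √(4 - l ^ 2) ≤ 1 / (2 * π) * (2 * √(2 - l)) := by gcongr
    _ = π⁻¹ * (√(2 - l))⁻¹ * (2 - l) := by
      field_simp
      rw [sq_sqrt h2l.le]
    _ ≤ π⁻¹ * (√(2 - l))⁻¹ * (u - l) := by gcongr

lemma log_sub_log_mul_semicircleDensity_le {u v l : ℝ} (hu : 2 < u) (huv : u ≤ v)
    (hl : l ∈ Icc (-2 : ℝ) 2) :
    (log (v - l) - log (u - l)) * semicircleDensity l
      ≤ (v - u) * (π⁻¹ * (2 - l) ^ (-(1 / 2) : ℝ)) := by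
  rcases hl.2.eq_or_lt with rfl | hl2
  · norm_num [semicircleDensity]
  calc (log (v - l) - log (u - l)) * semicircleDensity l
      ≤ (v - l - (u - l)) / (u - l) * semicircleDensity l := by
        gcongr
        · exact semicircleDensity_nonneg l
        · exact log_sub_log_le_div (by linarith) (by linarith)
    _ = (v - u) * (semicircleDensity l / (u - l)) := by ring
    _ ≤ (v - u) * (π⁻¹ * (2 - l) ^ (-(1 / 2) : ℝ)) := by
        gcongr
        exact semicircleDensity_div_le hu.le ⟨hl.1, hl2⟩

lemma semicircleLogPotential_sub_le {u v : ℝ} (hu : 2 < u) (huv : u ≤ v) :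
    semicircleLogPotential v - semicircleLogPotential u ≤ 4 / π * (v - u) := by
  have hv : 2 < v := hu.trans_le huv
  rw [semicircleLogPotential_eq_integral hu, semicircleLogPotential_eq_integral hv,
    ← intervalIntegral.integral_sub (intervalIntegrable_log_sub_mul_semicircleDensity hv)
      (intervalIntegrable_log_sub_mul_semicircleDensity hu)]
  calc ∫ l in (-2 : ℝ)..2, log (v - l) * semicircleDensity l - log (u - l) * semicircleDensity l
      ≤ ∫ l in (-2 : ℝ)..2, (v - u) * (π⁻¹ * (2 - l) ^ (-(1 / 2) : ℝ)) := by
        refine intervalIntegral.integral_mono_on (by norm_num)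
          ((intervalIntegrable_log_sub_mul_semicircleDensity hv).sub
            (intervalIntegrable_log_sub_mul_semicircleDensity hu))
          ((intervalIntegrable_two_sub_rpow_neg_half.const_mul _).const_mul _) fun l hl => ?_
        rw [← sub_mul]
        exact log_sub_log_mul_semicircleDensity_le hu huv hl
    _ = 4 / π * (v - u) := by
        rw [intervalIntegral.integral_const_mul, intervalIntegral.integral_const_mul,
          integral_two_sub_rpow_neg_half]
        ring

lemma monotoneOn_semicircleLogPotential : MonotoneOn semicircleLogPotential (Ioi 2) := by
  intro u hu v hv huv
  rw [semicircleLogPotential_eq_integral hu, semicircleLogPotential_eq_integral hv]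
  refine intervalIntegral.integral_mono_on (by norm_num)
    (intervalIntegrable_log_sub_mul_semicircleDensity hu)
    (intervalIntegrable_log_sub_mul_semicircleDensity hv) fun l hl => ?_
  have hu' : (2 : ℝ) < u := hu
  exact mul_le_mul_of_nonneg_right (log_le_log (by linarith [hl.2]) (by linarith))
    (semicircleDensity_nonneg l)

lemma lipschitzOnWith_semicircleLogPotential :
    LipschitzOnWith 2 semicircleLogPotential (Ioi 2) := by
  have h4π : 4 / π ≤ 2 := by
    rw [div_le_iff₀ pi_pos]
    linarith [pi_gt_three]
  refine LipschitzOnWith.of_dist_le_mul fun v hv u hu => ?_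
  wlog huv : u ≤ v generalizing u v
  · rw [dist_comm, dist_comm v]
    exact this u hu v hv (le_of_not_ge huv)
  rw [dist_eq_norm, dist_eq_norm,
    norm_of_nonneg (sub_nonneg.2 (monotoneOn_semicircleLogPotential hu hv huv)),
    norm_of_nonneg (sub_nonneg.2 huv)]
  calc semicircleLogPotential v - semicircleLogPotential u ≤ 4 / π * (v - u) :=
        semicircleLogPotential_sub_le hu huv
    _ ≤ 2 * (v - u) := by gcongr

lemma strictAntiOn_semicircleLogPotential_sub_sq :
    StrictAntiOn (fun u => semicircleLogPotential u - u ^ 2 / 2) (Ioi 2) := by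
  intro u hu v hv huv
  have hu' : (2 : ℝ) < u := hu
  have h4π : 4 / π < 2 := by
    rw [div_lt_iff₀ pi_pos]
    linarith [pi_gt_three]
  have hΩ := semicircleLogPotential_sub_le hu' huv.le
  have : 4 / π * (v - u) < 2 * (v - u) := by gcongr
  nlinarith

lemma exists_semicircleLogPotential_root_mem_Icc {L β : ℝ} (hL : 0 ≤ L) (hβ : β + 1 < √L)
    (hβ' : 2 + exp (-β) < √L) :
    ∃ x ∈ Icc (√L) (√L + 2), 1 / 2 * L + β + semicircleLogPotential x - x ^ 2 / 2 = 0 := by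
  set S := √L
  have hSL : S ^ 2 = L := sq_sqrt hL
  have hS2 : 2 < S := by linarith [exp_pos (-β)]
  have hcont : ContinuousOn (fun u => semicircleLogPotential u - u ^ 2 / 2) (Icc S (S + 2)) :=
    (lipschitzOnWith_semicircleLogPotential.continuousOn.mono
      fun u hu => hS2.trans_le hu.1).sub (by fun_prop)
  have hleft : -(L / 2) - β ≤ semicircleLogPotential S - S ^ 2 / 2 := by
    have : -β < log (S - 2) := (lt_log_iff_exp_lt (by linarith)).2 (by linarith)
    linarith [log_sub_two_le_semicircleLogPotential hS2]
  have hright : semicircleLogPotential (S + 2) - (S + 2) ^ 2 / 2 ≤ -(L / 2) - β := by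
    have := log_le_sub_one_of_pos (show 0 < S + 2 + 2 by linarith)
    nlinarith [semicircleLogPotential_le_log_add_two (show 2 < S + 2 by linarith)]
  obtain ⟨x, hx, hroot⟩ := intermediate_value_Icc' (by linarith) hcont ⟨hright, hleft⟩
  exact ⟨x, hx, by linarith⟩

lemma abs_sub_mul_le_abs_sq_sub {a b s : ℝ} (hab : s ≤ a + b) :
    |a - b| * s ≤ |a ^ 2 - b ^ 2| := by
  rw [sq_sub_sq, abs_mul, mul_comm]
  exact mul_le_mul_of_nonneg_right (hab.trans (le_abs_self _)) (abs_nonneg _)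

section Asymptotics

variable {ι : Type*} {l : Filter ι} {L x : ι → ℝ} {β : ℝ}

lemma tendsto_sq_sub_sub_log_of_log_bounds (hL : Tendsto L l atTop)
    (hx : ∀ᶠ i in l, √(L i) ≤ x i ∧ x i ≤ √(L i) + 2)
    (hE : ∀ᶠ i in l, 2 * log (x i - 2) ≤ x i ^ 2 - L i - 2 * β ∧
      x i ^ 2 - L i - 2 * β ≤ 2 * log (x i + 2)) :
    Tendsto (fun i => x i ^ 2 - L i - 2 * β - log (L i)) l (𝓝 0) := by
  have hS : Tendsto (fun i => √(L i)) l atTop := tendsto_sqrt_atTop.comp hL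
  have hlog (a : ℝ) : Tendsto (fun i => 2 * log (1 + a * (√(L i))⁻¹)) l (𝓝 0) := by
    have hcont : ContinuousAt (fun t : ℝ => 2 * log (1 + a * t)) 0 :=
      ((continuousAt_const.add (continuousAt_const.mul continuousAt_id)).log
        (by simp)).const_mul 2
    have h := hcont.tendsto.comp (tendsto_inv_atTop_zero.comp hS)
    simpa [Function.comp_def] using h
  refine tendsto_of_tendsto_of_tendsto_of_le_of_le' (hlog (-2)) (hlog 4) ?_ ?_ <;>
    filter_upwards [hx, hE, hS.eventually_gt_atTop 2, hL.eventually_gt_atTop 0]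
      with i ⟨hxS, hxS2⟩ ⟨hlow, hupp⟩ hS2 hL0
  all_goals
    have hlogL : log (L i) = 2 * log √(L i) := by rw [log_sqrt hL0.le]; ring
  · calc 2 * log (1 + -2 * (√(L i))⁻¹) = 2 * log (√(L i) - 2) - 2 * log √(L i) := by
          rw [show 1 + -2 * (√(L i))⁻¹ = (√(L i) - 2) / √(L i) by field_simp; ring,
            log_div (by linarith) (by linarith)]
          ring
      _ ≤ 2 * log (x i - 2) - log (L i) := by
          rw [hlogL]
          gcongr
      _ ≤ _ := by linarith
  · calc x i ^ 2 - L i - 2 * β - log (L i) ≤ 2 * log (x i + 2) - 2 * log √(L i) := by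
          linarith
      _ ≤ 2 * log (√(L i) + 4) - 2 * log √(L i) := by
          have := log_le_log (show 0 < x i + 2 by linarith)
            (show x i + 2 ≤ √(L i) + 4 by linarith)
          linarith
      _ = 2 * log (1 + 4 * (√(L i))⁻¹) := by
          rw [show 1 + 4 * (√(L i))⁻¹ = (√(L i) + 4) / √(L i) by field_simp,
            log_div (by linarith) (by linarith)]
          ring

lemma tendsto_sub_sqrt_add_log_div_mul_sqrt_of_log_bounds (hL : Tendsto L l atTop)
    (hx : ∀ᶠ i in l, √(L i) ≤ x i ∧ x i ≤ √(L i) + 2)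
    (hE : ∀ᶠ i in l, 2 * log (x i - 2) ≤ x i ^ 2 - L i - 2 * β ∧
      x i ^ 2 - L i - 2 * β ≤ 2 * log (x i + 2)) :
    Tendsto (fun i => (x i - (√(L i) + log (L i) / (2 * √(L i)) + β / √(L i))) * √(L i))
      l (𝓝 0) := by
  set c : ι → ℝ := fun i => (log (L i) + 2 * β) / (2 * √(L i))
  have hS : Tendsto (fun i => √(L i)) l atTop := tendsto_sqrt_atTop.comp hL
  have hc : Tendsto c l (𝓝 0) := by
    have hlogS : Tendsto (fun i => log (L i) / √(L i)) l (𝓝 0) := by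
      have h := (isLittleO_log_rpow_atTop (r := 1 / 2) (by norm_num)).tendsto_div_nhds_zero.comp hL
      refine h.congr fun i => ?_
      simp [sqrt_eq_rpow]
    have := (hlogS.const_mul (1 / 2)).add ((tendsto_inv_atTop_zero.comp hS).const_mul β)
    simp only [mul_zero, add_zero] at this
    refine this.congr' ?_
    filter_upwards [hS.eventually_gt_atTop 0] with i hi
    simp only [c, Function.comp]
    field_simp
  have hlim := ((tendsto_sq_sub_sub_log_of_log_bounds hL hx hE).sub (hc.pow 2)).abs
  rw [zero_pow two_ne_zero, sub_zero, abs_zero] at hlim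
  refine squeeze_zero_norm' ?_ hlim
  filter_upwards [hx, hS.eventually_gt_atTop 0,
    hL.eventually (tendsto_log_atTop.eventually_ge_atTop (-(2 * β)))] with i ⟨hxS, _⟩ hS0 hlogL
  have hcS : 2 * √(L i) * c i = log (L i) + 2 * β := by
    simp only [c]
    field_simp
  have hsum : √(L i) + log (L i) / (2 * √(L i)) + β / √(L i) = √(L i) + c i := by
    simp only [c]
    field_simp
    ring
  have hsq : (√(L i) + c i) ^ 2 = L i + log (L i) + 2 * β + c i ^ 2 := by
    linear_combination sq_sqrt (sqrt_pos.1 hS0).le + hcS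
  have hc0 : 0 ≤ c i := div_nonneg (by linarith) (by positivity)
  rw [hsum, norm_mul, norm_of_nonneg hS0.le, norm_eq_abs]
  calc |x i - (√(L i) + c i)| * √(L i) ≤ |x i ^ 2 - (√(L i) + c i) ^ 2| :=
        abs_sub_mul_le_abs_sq_sub (by linarith)
    _ = _ := by rw [hsq]; ring_nf

end Asymptotics

theorem stmt17_general (β : ℝ) :
    ∃ γ : ℕ → ℝ,
      (∀ᶠ d : ℕ in atTop,
        (2 < γ d ∧
          (1 / 2) * Real.log d + β + semicircleLogPotential (γ d) - (γ d) ^ 2 / 2 = 0) ∧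
        ∀ y : ℝ, 2 < y →
          (1 / 2) * Real.log d + β + semicircleLogPotential y - y ^ 2 / 2 = 0 →
            y = γ d) ∧
      Tendsto (fun d : ℕ =>
          (γ d - (Real.sqrt (Real.log d) + Real.log (Real.log d) / (2 * Real.sqrt (Real.log d))
            + β / Real.sqrt (Real.log d))) * Real.sqrt (Real.log d))
        atTop (nhds 0) := by
  have hL : Tendsto (fun d : ℕ => log d) atTop atTop :=
    tendsto_log_atTop.comp tendsto_natCast_atTop_atTop
  have hS := tendsto_sqrt_atTop.comp hL
  have hroot : ∀ᶠ d : ℕ in atTop, ∃ x ∈ Icc √(log d) (√(log d) + 2),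
      1 / 2 * log d + β + semicircleLogPotential x - x ^ 2 / 2 = 0 := by
    filter_upwards [hS.eventually_gt_atTop (β + 1), hS.eventually_gt_atTop (2 + exp (-β))]
      with d h₁ h₂
    exact exists_semicircleLogPotential_root_mem_Icc (log_natCast_nonneg d) h₁ h₂
  obtain ⟨γ, hγ⟩ := hroot.choice
  have hγ₂ : ∀ᶠ d : ℕ in atTop, 2 < γ d := by
    filter_upwards [hγ, hS.eventually_gt_atTop 2] with d hd hS₂
    exact hS₂.trans_le hd.1.1
  refine ⟨γ, ?_,
    tendsto_sub_sqrt_add_log_div_mul_sqrt_of_log_bounds hL (hγ.mono fun d hd => hd.1) ?_⟩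
  · filter_upwards [hγ, hγ₂] with d hd h₂
    refine ⟨⟨h₂, hd.2⟩, fun y hy hy' => ?_⟩
    exact strictAntiOn_semicircleLogPotential_sub_sq.injOn hy h₂ (by linarith [hd.2])
  · filter_upwards [hγ, hγ₂] with d hd h₂
    constructor <;> linarith [log_sub_two_le_semicircleLogPotential h₂,
      semicircleLogPotential_le_log_add_two h₂, hd.2]

/-- Fix `α ∈ (0,1)` and a constant `β ∈ ℝ`.  For every sufficiently
large `d` there is a unique `γ(d) > 2` solving
`(1/2) log d + β + Ω(γ(d)) - γ(d)²/2 = 0`, and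
`γ(d) = √(log d) + (log log d)/(2√(log d)) + β/√(log d) + o(1/√(log d))` as `d → ∞`. -/
theorem stmt17 (α β : ℝ) (hα : α ∈ Set.Ioo (0 : ℝ) 1) :
    ∃ γ : ℕ → ℝ,
      (∀ᶠ d : ℕ in atTop,
        (2 < γ d ∧
          (1 / 2) * Real.log d + β + semicircleLogPotential (γ d) - (γ d) ^ 2 / 2 = 0) ∧
        ∀ y : ℝ, 2 < y →
          (1 / 2) * Real.log d + β + semicircleLogPotential y - y ^ 2 / 2 = 0 →
            y = γ d) ∧
      Tendsto (fun d : ℕ =>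
          (γ d - (Real.sqrt (Real.log d) + Real.log (Real.log d) / (2 * Real.sqrt (Real.log d))
            + β / Real.sqrt (Real.log d))) * Real.sqrt (Real.log d))
        atTop (nhds 0) :=
  stmt17_general β
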